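/- Let g be a finite-dimensional simple Lie algebra over an algebraically closed field k of characteristic 0 and σ an involution of g with g = g₀ ⊕ g₁. Let h ∈ g₀ be such that g is the direct sum of the eigenspaces g(n) = {z ∈ g | [h,z] = n z}, n ∈ ℤ, of ad h. Assume that every nonzero eigenvalue occurring in g₀ is even (i.e. g₀ ∩ g(n) = 0 for all odd n), and that g₁ ∩ g(n) ≠ 0 for some odd n. Then g₁ ∩ g(n) = 0 for every even n; that is, all ad h-eigenvalues occurring in g₁ are odd. -/

import Mathlib

open Module

section Defs

variable (k : Type*) [Field k] (g : Type*) [LieRing g] [LieAlgebra k g]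

/-- The eigenspace of a Lie algebra automorphism `σ` with eigenvalue `ε`,
as a `k`-submodule of `g`.  For an involution `σ`, `autEigenspace k g σ 1` is the
fixed-point space `g₀` and `autEigenspace k g σ (-1)` is `g₁`. -/
def autEigenspace (σ : g ≃ₗ⁅k⁆ g) (ε : k) : Submodule k g where
  carrier := {x | σ x = ε • x}
  add_mem' {a b} ha hb := by
    have : σ (a + b) = σ a + σ b := map_add σ.toLieHom a b
    simp only [Set.mem_setOf_eq] at ha hb ⊢
    rw [this, ha, hb, smul_add]
  zero_mem' := by
    have : σ (0 : g) = 0 := map_zero σ.toLieHom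
    simp only [Set.mem_setOf_eq, this, smul_zero]
  smul_mem' t a ha := by
    have : σ (t • a) = t • σ a := map_smul σ.toLieHom t a
    simp only [Set.mem_setOf_eq] at ha ⊢
    rw [this, ha, smul_comm]

/-- The centraliser `z_g(x) = {z ∈ g | [z,x] = 0}` of an element `x` of a Lie algebra,
as a submodule. -/
def centralizerSubmodule (x : g) : Submodule k g where
  carrier := {z | ⁅z, x⁆ = 0}
  add_mem' {a b} ha hb := by
    simp only [Set.mem_setOf_eq] at ha hb ⊢
    rw [add_lie, ha, hb, add_zero]
  zero_mem' := zero_lie x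
  smul_mem' t a ha := by
    simp only [Set.mem_setOf_eq] at ha ⊢
    rw [smul_lie, ha, smul_zero]

end Defs
section Defs

variable (k : Type*) [Field k] (g : Type*) [LieRing g] [LieAlgebra k g]

/-- The eigenspace of `ad h` with eigenvalue `c`, as a submodule:
`{z ∈ g | [h, z] = c • z}`.  For a short grading, `g(i) = adEigenspace k g h (2 * i)`
for `i = -1, 0, 1`. -/
def adEigenspace (h : g) (c : k) : Submodule k g where
  carrier := {z | ⁅h, z⁆ = c • z}
  add_mem' {a b} ha hb := by
    simp only [Set.mem_setOf_eq] at ha hb ⊢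
    rw [lie_add, ha, hb, smul_add]
  zero_mem' := by simp
  smul_mem' t a ha := by
    simp only [Set.mem_setOf_eq] at ha ⊢
    rw [lie_smul, ha, smul_comm]

end Defs


/-!
Split `g` along `σ` and along the parity of the `ad h`-eigenvalue.  Since `g₀` has no odd part,
`g = A ⊕ C ⊕ D` with `A = g₀ ∩ g(even)`, `C = g₁ ∩ g(even)` and `D = g₁ ∩ g(odd)`, and the parities
of brackets give `[A, C] ⊆ C`, `[C, C] ⊆ A` and `[D, C] ⊆ g₀ ∩ g(odd) = 0`.  By the Jacobi identity
`C + [C, C]` is then an ideal centralized by `D`.  It cannot be all of `g`, for then `D ≠ 0` would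
lie in the centre; by simplicity it is zero, so `C = 0`.
-/

section BracketSpan

variable {R L : Type*} [Field R] [LieRing L] [LieAlgebra R L]

@[simp]
lemma mem_centralizerSubmodule {x z : L} : z ∈ centralizerSubmodule R L x ↔ ⁅z, x⁆ = 0 :=
  Iff.rfl

def bracketSpan (P Q : Submodule R L) : Submodule R L :=
  Submodule.map₂ (LieAlgebra.ad R L : L →ₗ[R] Module.End R L) P Q

lemma lie_mem_bracketSpan {P Q : Submodule R L} {x y : L} (hx : x ∈ P) (hy : y ∈ Q) :
    ⁅x, y⁆ ∈ bracketSpan P Q :=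
  Submodule.apply_mem_map₂ _ hx hy

lemma bracketSpan_le {P Q N : Submodule R L} :
    bracketSpan P Q ≤ N ↔ ∀ x ∈ P, ∀ y ∈ Q, ⁅x, y⁆ ∈ N :=
  Submodule.map₂_le

lemma bracketSpan_iSup_iSup_le {ι κ : Sort*} {P : ι → Submodule R L} {Q : κ → Submodule R L}
    {N : Submodule R L} (h : ∀ i j, bracketSpan (P i) (Q j) ≤ N) :
    bracketSpan (⨆ i, P i) (⨆ j, Q j) ≤ N := by
  simp only [bracketSpan, Submodule.map₂_iSup_left, Submodule.map₂_iSup_right]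
  exact iSup_le fun j => iSup_le fun i => h i j

lemma lie_mem_bracketSpan_of_lie_mem {P Q : Submodule R L} {x y : L}
    (hP : ∀ p ∈ P, ⁅x, p⁆ ∈ P) (hQ : ∀ q ∈ Q, ⁅x, q⁆ ∈ Q) (hy : y ∈ bracketSpan P Q) :
    ⁅x, y⁆ ∈ bracketSpan P Q := by
  suffices bracketSpan P Q ≤ (bracketSpan P Q).comap (LieAlgebra.ad R L x) from this hy
  refine bracketSpan_le.mpr fun p hp q hq => ?_
  rw [Submodule.mem_comap, LieAlgebra.ad_apply, leibniz_lie]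
  exact add_mem (lie_mem_bracketSpan (hP p hp) hq) (lie_mem_bracketSpan hp (hQ q hq))

lemma bracketSpan_le_centralizerSubmodule {P Q : Submodule R L} {x : L}
    (hP : P ≤ centralizerSubmodule R L x) (hQ : Q ≤ centralizerSubmodule R L x) :
    bracketSpan P Q ≤ centralizerSubmodule R L x :=
  bracketSpan_le.mpr fun p hp q hq => by
    rw [mem_centralizerSubmodule, lie_lie, mem_centralizerSubmodule.mp (hQ hq),
      mem_centralizerSubmodule.mp (hP hp), lie_zero, lie_zero, sub_zero]

lemma sup_bracketSpan_le_centralizerSubmodule {C : Submodule R L} {x : L}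
    (hC : C ≤ centralizerSubmodule R L x) : C ⊔ bracketSpan C C ≤ centralizerSubmodule R L x :=
  sup_le hC (bracketSpan_le_centralizerSubmodule hC hC)

end BracketSpan

section SplitIdeal

variable {R L : Type*} [Field R] [LieRing L] [LieAlgebra R L] {A C D : Submodule R L}

lemma lie_mem_sup_bracketSpan (hspan : A ⊔ C ⊔ D = ⊤) (hAC : ∀ a ∈ A, ∀ c ∈ C, ⁅a, c⁆ ∈ C)
    (hCC : ∀ c ∈ C, ∀ c' ∈ C, ⁅c, c'⁆ ∈ A) (hDC : ∀ d ∈ D, C ≤ centralizerSubmodule R L d)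
    (x : L) {y : L} (hy : y ∈ C ⊔ bracketSpan C C) : ⁅x, y⁆ ∈ C ⊔ bracketSpan C C := by
  obtain ⟨ac, hac, d, hd, rfl⟩ := Submodule.mem_sup.mp (hspan ▸ Submodule.mem_top (x := x))
  obtain ⟨a, ha, c, hc, rfl⟩ := Submodule.mem_sup.mp hac
  have hdy : ⁅d, y⁆ = 0 := by
    have hyd := sup_bracketSpan_le_centralizerSubmodule (hDC d hd) hy
    rw [← lie_skew, mem_centralizerSubmodule.mp hyd, neg_zero]
  obtain ⟨c', hc', w, hw, rfl⟩ := Submodule.mem_sup.mp hy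
  have hwA : w ∈ A := bracketSpan_le.mpr hCC hw
  have hcw : ⁅c, w⁆ ∈ C := by
    rw [← lie_skew]
    exact neg_mem (hAC w hwA c hc)
  rw [add_lie, add_lie, hdy, add_zero, lie_add, lie_add]
  exact add_mem
    (add_mem (Submodule.mem_sup_left (hAC a ha c' hc'))
      (Submodule.mem_sup_right (lie_mem_bracketSpan_of_lie_mem (hAC a ha) (hAC a ha) hw)))
    (add_mem (Submodule.mem_sup_right (lie_mem_bracketSpan hc hc')) (Submodule.mem_sup_left hcw))

theorem eq_bot_of_isSimple_of_centralized [LieAlgebra.IsSimple R L] (hspan : A ⊔ C ⊔ D = ⊤)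
    (hAC : ∀ a ∈ A, ∀ c ∈ C, ⁅a, c⁆ ∈ C) (hCC : ∀ c ∈ C, ∀ c' ∈ C, ⁅c, c'⁆ ∈ A)
    (hDC : ∀ d ∈ D, C ≤ centralizerSubmodule R L d) (hD : D ≠ ⊥) : C = ⊥ := by
  let I : LieIdeal R L :=
    { toSubmodule := C ⊔ bracketSpan C C
      lie_mem := fun {x _} hy => lie_mem_sup_bracketSpan hspan hAC hCC hDC x hy }
  rcases LieAlgebra.IsSimple.eq_bot_or_eq_top I with hI | hI
  · refine eq_bot_iff.mpr fun c hc => ?_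
    have hcI : c ∈ I := Submodule.mem_sup_left hc
    rwa [hI] at hcI
  · refine absurd (eq_bot_iff.mpr fun d hd => ?_) hD
    have hJ := sup_bracketSpan_le_centralizerSubmodule (hDC d hd)
    have hdz : d ∈ LieAlgebra.center R L := by
      refine (LieModule.mem_maxTrivSubmodule R L L d).mpr fun y => ?_
      have hyI : y ∈ I := hI ▸ LieSubmodule.mem_top y
      exact mem_centralizerSubmodule.mp (hJ hyI)
    rwa [LieAlgebra.center_eq_bot] at hdz

end SplitIdeal

section Involution

variable {k g : Type*} [Field k] [LieRing g] [LieAlgebra k g] {σ : g ≃ₗ⁅k⁆ g} {h : g}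

@[simp]
lemma mem_autEigenspace {ε : k} {x : g} : x ∈ autEigenspace k g σ ε ↔ σ x = ε • x :=
  Iff.rfl

@[simp]
lemma mem_adEigenspace {c : k} {z : g} : z ∈ adEigenspace k g h c ↔ ⁅h, z⁆ = c • z :=
  Iff.rfl

lemma lie_mem_autEigenspace {ε δ : k} {x y : g} (hx : x ∈ autEigenspace k g σ ε)
    (hy : y ∈ autEigenspace k g σ δ) : ⁅x, y⁆ ∈ autEigenspace k g σ (ε * δ) := by
  rw [mem_autEigenspace] at hx hy ⊢
  rw [LieEquiv.map_lie, hx, hy, smul_lie, lie_smul, smul_smul]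

lemma lie_mem_adEigenspace {c d : k} {x y : g} (hx : x ∈ adEigenspace k g h c)
    (hy : y ∈ adEigenspace k g h d) : ⁅x, y⁆ ∈ adEigenspace k g h (c + d) := by
  rw [mem_adEigenspace] at hx hy ⊢
  rw [leibniz_lie, hx, hy, smul_lie, lie_smul, add_smul]

lemma map_mem_adEigenspace (hσh : σ h = h) {c : k} {z : g} (hz : z ∈ adEigenspace k g h c) :
    σ z ∈ adEigenspace k g h c := by
  rw [mem_adEigenspace] at hz ⊢
  rw [← hσh, ← LieEquiv.map_lie, hz, map_smul]

lemma le_autEigenspace_sup_autEigenspace [NeZero (2 : k)] (hσ : ∀ x, σ (σ x) = x)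
    {W : Submodule k g} (hW : ∀ x ∈ W, σ x ∈ W) :
    W ≤ autEigenspace k g σ 1 ⊓ W ⊔ autEigenspace k g σ (-1) ⊓ W := by
  intro x hx
  have hsplit : x = (2⁻¹ : k) • (x + σ x) + (2⁻¹ : k) • (x - σ x) := by
    rw [← smul_add, add_add_sub_cancel, ← two_smul k, smul_smul, inv_mul_cancel₀ two_ne_zero,
      one_smul]
  rw [hsplit]
  refine Submodule.add_mem_sup (Submodule.mem_inf.mpr ⟨?_, W.smul_mem _ (W.add_mem hx (hW x hx))⟩)
    (Submodule.mem_inf.mpr ⟨?_, W.smul_mem _ (W.sub_mem hx (hW x hx))⟩)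
  · rw [mem_autEigenspace, map_smul, map_add, hσ, one_smul, add_comm]
  · rw [mem_autEigenspace, map_smul, map_sub, hσ, neg_one_smul, ← smul_neg, neg_sub]

end Involution

section ParityPart

variable {k g : Type*} [Field k] [LieRing g] [LieAlgebra k g]

-- In the notation of the header, `A`, `C`, `D` are `parityPart σ h 1 0`, `parityPart σ h (-1) 0`
-- and `parityPart σ h (-1) 1`.
def parityPart (σ : g ≃ₗ⁅k⁆ g) (h : g) (ε : k) (e : ℤ) : Submodule k g :=
  ⨆ m : ℤ, autEigenspace k g σ ε ⊓ adEigenspace k g h ((2 * m + e : ℤ) : k)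

variable {σ : g ≃ₗ⁅k⁆ g} {h : g}

lemma inf_adEigenspace_le_parityPart {ε : k} {n m e : ℤ} (hn : n = 2 * m + e) :
    autEigenspace k g σ ε ⊓ adEigenspace k g h (n : k) ≤ parityPart σ h ε e :=
  hn ▸ le_iSup (fun m : ℤ => autEigenspace k g σ ε ⊓ adEigenspace k g h ((2 * m + e : ℤ) : k)) m

lemma lie_mem_parityPart {ε δ : k} {e f : ℤ} {x y : g} (hx : x ∈ parityPart σ h ε e)
    (hy : y ∈ parityPart σ h δ f) : ⁅x, y⁆ ∈ parityPart σ h (ε * δ) (e + f) := by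
  refine bracketSpan_iSup_iSup_le (fun m m' => bracketSpan_le.mpr fun x hx y hy => ?_)
    (lie_mem_bracketSpan hx hy)
  refine inf_adEigenspace_le_parityPart (n := 2 * m + e + (2 * m' + f)) (m := m + m') (by ring)
    (Submodule.mem_inf.mpr ⟨lie_mem_autEigenspace hx.1 hy.1, ?_⟩)
  exact_mod_cast lie_mem_adEigenspace hx.2 hy.2

lemma inf_adEigenspace_le_parityPart_sup {ε : k} (n : ℤ) :
    autEigenspace k g σ ε ⊓ adEigenspace k g h (n : k) ≤
      parityPart σ h ε 0 ⊔ parityPart σ h ε 1 := by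
  obtain ⟨m, hm | hm⟩ := Int.even_or_odd' n
  · exact le_sup_of_le_left (inf_adEigenspace_le_parityPart (m := m) (by omega))
  · exact le_sup_of_le_right (inf_adEigenspace_le_parityPart hm)

lemma parityPart_sup_eq_top [NeZero (2 : k)] (hσ : ∀ x, σ (σ x) = x) (hσh : σ h = h)
    (htop : ⨆ n : ℤ, adEigenspace k g h (n : k) = ⊤) :
    (parityPart σ h 1 0 ⊔ parityPart σ h 1 1) ⊔ (parityPart σ h (-1) 0 ⊔ parityPart σ h (-1) 1)
      = ⊤ := by
  refine eq_top_iff.mpr (htop ▸ iSup_le fun n => ?_)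
  refine (le_autEigenspace_sup_autEigenspace hσ fun _ => map_mem_adEigenspace hσh).trans
    (sup_le_sup (inf_adEigenspace_le_parityPart_sup n) (inf_adEigenspace_le_parityPart_sup n))

end ParityPart

theorem odd_part_forces_all_odd_general
    (k : Type*) [Field k] [CharZero k]
    (g : Type*) [LieRing g] [LieAlgebra k g]
    [LieAlgebra.IsSimple k g]
    (σ : g ≃ₗ⁅k⁆ g) (hσ : ∀ x, σ (σ x) = x)
    (h : g) (hh₀ : h ∈ autEigenspace k g σ 1)
    (hgrad : DirectSum.IsInternal (fun n : ℤ => adEigenspace k g h (n : k)))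
    (hevn : ∀ n : ℤ, Odd n → autEigenspace k g σ 1 ⊓ adEigenspace k g h (n : k) = ⊥)
    (hodd : ∃ n : ℤ, Odd n ∧ autEigenspace k g σ (-1) ⊓ adEigenspace k g h (n : k) ≠ ⊥) :
    ∀ n : ℤ, Even n → autEigenspace k g σ (-1) ⊓ adEigenspace k g h (n : k) = ⊥ := by
  have hσh : σ h = h := by simpa using hh₀
  have hfixed_odd : parityPart σ h 1 1 = ⊥ :=
    iSup_eq_bot.mpr fun m => hevn _ (odd_two_mul_add_one m)
  have hspan : parityPart σ h 1 0 ⊔ parityPart σ h (-1) 0 ⊔ parityPart σ h (-1) 1 = ⊤ := by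
    simpa [hfixed_odd, sup_assoc] using
      parityPart_sup_eq_top hσ hσh hgrad.submodule_iSup_eq_top
  have hC : parityPart σ h (-1) 0 = ⊥ := by
    refine eq_bot_of_isSimple_of_centralized hspan (fun a ha c hc => ?_) (fun c hc c' hc' => ?_)
      (fun d hd c hc => ?_) ?_
    · simpa using lie_mem_parityPart ha hc
    · simpa using lie_mem_parityPart hc hc'
    · simpa [hfixed_odd] using lie_mem_parityPart hc hd
    · obtain ⟨n, ⟨m, rfl⟩, hne⟩ := hodd
      exact ne_bot_of_le_ne_bot hne (inf_adEigenspace_le_parityPart rfl)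
  rintro n ⟨m, rfl⟩
  exact eq_bot_iff.mpr (hC ▸ inf_adEigenspace_le_parityPart (m := m) (by ring))

/-- Let `g` be a finite-dimensional simple Lie algebra over an
algebraically closed field `k` of characteristic 0 and `σ` an involution of `g` with
`g = g₀ ⊕ g₁`.  Let `h ∈ g₀` be such that `g` is the direct sum of the eigenspaces
`g(n) = {z | [h,z] = n z}`, `n ∈ ℤ`, of `ad h`.  If `g₀ ∩ g(n) = 0` for all odd `n`
while `g₁ ∩ g(n) ≠ 0` for some odd `n`, then `g₁ ∩ g(n) = 0` for every even `n`. -/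
theorem odd_part_forces_all_odd
    (k : Type*) [Field k] [IsAlgClosed k] [CharZero k]
    (g : Type*) [LieRing g] [LieAlgebra k g] [FiniteDimensional k g]
    [LieAlgebra.IsSimple k g]
    (σ : g ≃ₗ⁅k⁆ g) (hσ : ∀ x, σ (σ x) = x)
    (h : g) (hh₀ : h ∈ autEigenspace k g σ 1)
    (hgrad : DirectSum.IsInternal (fun n : ℤ => adEigenspace k g h (n : k)))
    (hevn : ∀ n : ℤ, Odd n → autEigenspace k g σ 1 ⊓ adEigenspace k g h (n : k) = ⊥)
    (hodd : ∃ n : ℤ, Odd n ∧ autEigenspace k g σ (-1) ⊓ adEigenspace k g h (n : k) ≠ ⊥) :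
    ∀ n : ℤ, Even n → autEigenspace k g σ (-1) ⊓ adEigenspace k g h (n : k) = ⊥ :=
  odd_part_forces_all_odd_general k g σ hσ h hh₀ hgrad hevn hodd
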